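/- arXiv:1606.08525 — 4 statements merged into one kernel-verified Lean document; each statement's English description precedes it below -/
import Mathlib

section
/- There exists an absolute constant C such that any set of N lines in ℝ³ forms at most C·N^{3/2} joints, where a joint of the set is a point x ∈ ℝ³ through which pass at least three lines of the set whose direction vectors are linearly independent. -/
open MvPolynomial Polynomial

noncomputable def lineComp (q v : Fin 3 → ℝ) : MvPolynomial (Fin 3) ℝ →ₐ[ℝ] Polynomial ℝ :=
  MvPolynomial.aeval (fun i => Polynomial.C (q i) + Polynomial.X * Polynomial.C (v i))

lemma eval_lineComp (q v : Fin 3 → ℝ) (p : MvPolynomial (Fin 3) ℝ) (t : ℝ) :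
    (lineComp q v p).eval t = MvPolynomial.eval (q + t • v) p := by
  induction p using MvPolynomial.induction_on with
  | C a => simp [lineComp]
  | add p q hp hq => simp [map_add, hp, hq]
  | mul_X p i hp =>
    rw [map_mul, Polynomial.eval_mul, hp, MvPolynomial.eval_mul]
    have : lineComp q v (MvPolynomial.X i) = Polynomial.C (q i) + Polynomial.X * Polynomial.C (v i) :=
      MvPolynomial.aeval_X _ i
    rw [this]
    simp only [Polynomial.eval_add, Polynomial.eval_mul, Polynomial.eval_C, Polynomial.eval_X,
      MvPolynomial.eval_X, Pi.add_apply, Pi.smul_apply, smul_eq_mul]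

lemma natDegree_lineComp_le (q v : Fin 3 → ℝ) (p : MvPolynomial (Fin 3) ℝ) :
    (lineComp q v p).natDegree ≤ p.totalDegree := by
  nth_rewrite 1 [p.as_sum]
  rw [map_sum]
  apply Polynomial.natDegree_sum_le_of_forall_le
  intro a ha
  rw [lineComp, MvPolynomial.aeval_monomial]
  apply (Polynomial.natDegree_mul_le).trans
  have h1 : (algebraMap ℝ (Polynomial ℝ) (MvPolynomial.coeff a p)).natDegree = 0 := by
    simp [Polynomial.natDegree_C]
  rw [h1, zero_add]
  refine (Polynomial.natDegree_prod_le _ _).trans ?_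
  calc ∑ i ∈ a.support, ((Polynomial.C (q i) + Polynomial.X * Polynomial.C (v i)) ^ (a i)).natDegree
      ≤ ∑ i ∈ a.support, a i := by
        apply Finset.sum_le_sum
        intro i _
        refine (Polynomial.natDegree_pow_le).trans ?_
        have h2 : (Polynomial.C (q i) + Polynomial.X * Polynomial.C (v i)).natDegree ≤ 1 := by
          refine (Polynomial.natDegree_add_le _ _).trans ?_
          simp only [Polynomial.natDegree_C, max_le_iff]
          constructor
          · exact Nat.zero_le _
          · exact (Polynomial.natDegree_mul_le).trans (by simp)
        calc (a i) * _ ≤ a i * 1 := Nat.mul_le_mul_left _ h2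
          _ = a i := mul_one _
    _ = a.sum (fun _ e => e) := rfl
    _ ≤ p.totalDegree := MvPolynomial.le_totalDegree ha

noncomputable def dirDeriv (v : Fin 3 → ℝ) (p : MvPolynomial (Fin 3) ℝ) : MvPolynomial (Fin 3) ℝ :=
  ∑ i, MvPolynomial.C (v i) * MvPolynomial.pderiv i p

lemma dirDeriv_add (v : Fin 3 → ℝ) (p q : MvPolynomial (Fin 3) ℝ) :
    dirDeriv v (p + q) = dirDeriv v p + dirDeriv v q := by
  simp [dirDeriv, map_add, mul_add, Finset.sum_add_distrib]

lemma lineComp_dirDeriv (q v : Fin 3 → ℝ) (p : MvPolynomial (Fin 3) ℝ) :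
    lineComp q v (dirDeriv v p) = Polynomial.derivative (lineComp q v p) := by
  induction p using MvPolynomial.induction_on with
  | C a => simp [dirDeriv, lineComp]
  | add p p' hp hp' => rw [dirDeriv_add, map_add, hp, hp', map_add, map_add]
  | mul_X p i hp =>
    have key : dirDeriv v (p * MvPolynomial.X i)
        = dirDeriv v p * MvPolynomial.X i + MvPolynomial.C (v i) * p := by
      classical
      simp only [dirDeriv, MvPolynomial.pderiv_mul, mul_add, Finset.sum_add_distrib,
        Finset.sum_mul, MvPolynomial.pderiv_X]
      congr 1
      · exact Finset.sum_congr rfl fun j _ => by ring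
      · rw [Finset.sum_eq_single i]
        · simp
        · intro j _ hj
          simp [Pi.single_apply, hj]
        · simp
    rw [key, map_add, map_mul, hp, map_mul]
    conv_rhs => rw [map_mul]
    rw [Polynomial.derivative_mul]
    have hX : lineComp q v (MvPolynomial.X i) = Polynomial.C (q i) + Polynomial.X * Polynomial.C (v i) :=
      MvPolynomial.aeval_X _ i
    have hC : lineComp q v (MvPolynomial.C (v i)) = Polynomial.C (v i) := by
      simp [lineComp]
    rw [hX, hC]
    simp only [Polynomial.derivative_add, Polynomial.derivative_C, Polynomial.derivative_mul,
      Polynomial.derivative_X, Polynomial.derivative_C, zero_add, one_mul, mul_zero, add_zero]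
    ring

lemma coeff_pderiv (i : Fin 3) (p : MvPolynomial (Fin 3) ℝ) (m : Fin 3 →₀ ℕ) :
    MvPolynomial.coeff m (MvPolynomial.pderiv i p)
      = ((m i : ℝ) + 1) * MvPolynomial.coeff (m + Finsupp.single i 1) p := by
  induction p using MvPolynomial.induction_on' with
  | add p q hp hq => simp [map_add, hp, hq]; ring
  | monomial s a =>
    rw [MvPolynomial.pderiv_monomial, MvPolynomial.coeff_monomial, MvPolynomial.coeff_monomial]
    by_cases h : s = m + Finsupp.single i 1
    · subst h
      have h1 : m + Finsupp.single i 1 - Finsupp.single i 1 = m := by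
        ext j
        simp only [Finsupp.add_apply, Finsupp.tsub_apply, Finsupp.single_apply]
        split <;> omega
      rw [if_pos h1]
      simp only [Finsupp.add_apply, Finsupp.single_apply, if_pos rfl, if_true]
      push_cast
      ring
    · rw [if_neg h]
      by_cases h2 : s - Finsupp.single i 1 = m
      · rw [if_pos h2]
        have hsi : s i = 0 := by
          by_contra hsi
          apply h
          rw [← h2]
          ext j
          simp only [Finsupp.add_apply, Finsupp.tsub_apply, Finsupp.single_apply]
          by_cases hj : i = j
          · subst hj; simp only [if_pos rfl, if_true]; omega
          · simp [hj]
        simp [hsi]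
      · rw [if_neg h2, mul_zero]

lemma pderiv_ne_zero_totalDegree (i : Fin 3) (p : MvPolynomial (Fin 3) ℝ)
    (h : MvPolynomial.pderiv i p ≠ 0) :
    (MvPolynomial.pderiv i p).totalDegree + 1 ≤ p.totalDegree := by
  obtain ⟨m, hm, hmax⟩ := Finset.exists_mem_eq_sup ((MvPolynomial.pderiv i p).support)
    (MvPolynomial.support_nonempty.2 h) (fun m => m.sum fun _ e => e)
  have hcoeff : MvPolynomial.coeff m (MvPolynomial.pderiv i p) ≠ 0 :=
    MvPolynomial.mem_support_iff.1 hm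
  rw [coeff_pderiv] at hcoeff
  have h2 : MvPolynomial.coeff (m + Finsupp.single i 1) p ≠ 0 := by
    intro h0; rw [h0, mul_zero] at hcoeff; exact hcoeff rfl
  have h3 : (m + Finsupp.single i 1).sum (fun _ e => e) ≤ p.totalDegree :=
    MvPolynomial.le_totalDegree (MvPolynomial.mem_support_iff.2 h2)
  have h4 : (m + Finsupp.single i 1).sum (fun _ e => e) = m.sum (fun _ e => e) + 1 := by
    rw [Finsupp.sum_add_index (by simp) (by simp)]
    simp [Finsupp.sum_single_index]
  have h5 : (MvPolynomial.pderiv i p).totalDegree = m.sum fun _ e => e := hmax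
  omega

lemma eq_C_of_pderiv_eq_zero (p : MvPolynomial (Fin 3) ℝ)
    (h : ∀ i, MvPolynomial.pderiv i p = 0) :
    p = MvPolynomial.C (MvPolynomial.coeff 0 p) := by
  ext m
  by_cases hm : m = 0
  · subst hm; simp
  · rw [MvPolynomial.coeff_C, if_neg (fun h' => hm h'.symm)]
    obtain ⟨i, hi⟩ : ∃ i, m i ≠ 0 := by
      by_contra h'
      push_neg at h'
      exact hm (Finsupp.ext h')
    have key := coeff_pderiv i p (m - Finsupp.single i 1)
    rw [h i] at key
    have hmm : m - Finsupp.single i 1 + Finsupp.single i 1 = m := by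
      ext j
      simp only [Finsupp.add_apply, Finsupp.tsub_apply, Finsupp.single_apply]
      by_cases hj : i = j
      · subst hj; simp only [if_pos rfl, if_true]; omega
      · simp [hj]
    rw [hmm] at key
    have := key.symm
    simp only [MvPolynomial.coeff_zero] at this
    exact (mul_eq_zero.1 this).resolve_left (Nat.cast_add_one_ne_zero _)

/-- `ℓ` is a line in `ℝⁿ` with direction vector `v`. -/
def IsLineWithDir {n : ℕ} (ℓ : Set (Fin n → ℝ)) (v : Fin n → ℝ) : Prop :=
  v ≠ 0 ∧ ∃ p : Fin n → ℝ, ℓ = {x | ∃ t : ℝ, x = p + t • v}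

/-- `ℓ` is a line in `ℝⁿ`. -/
def IsLine {n : ℕ} (ℓ : Set (Fin n → ℝ)) : Prop :=
  ∃ v : Fin n → ℝ, IsLineWithDir ℓ v

/-- `x` is a joint of the set of lines `L` in `ℝ³`: there are three lines of `L`
through `x` whose direction vectors are linearly independent. -/
def IsJoint (L : Finset (Set (Fin 3 → ℝ))) (x : Fin 3 → ℝ) : Prop :=
  ∃ ℓ : Fin 3 → Set (Fin 3 → ℝ), ∃ v : Fin 3 → (Fin 3 → ℝ),
    (∀ i, ℓ i ∈ L) ∧ (∀ i, x ∈ ℓ i) ∧ (∀ i, IsLineWithDir (ℓ i) (v i)) ∧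
    LinearIndependent ℝ v

/-- A line through two distinct points is unique. -/
lemma line_eq_of_two_mem {n : ℕ} {ℓ : Set (Fin n → ℝ)} {v : Fin n → ℝ}
    (hl : IsLineWithDir ℓ v) {x y : Fin n → ℝ} (hx : x ∈ ℓ) (hy : y ∈ ℓ) (hxy : x ≠ y) :
    ℓ = {z | ∃ s : ℝ, z = x + s • (y - x)} := by
  obtain ⟨hv, p, rfl⟩ := hl
  obtain ⟨a, rfl⟩ := hx
  obtain ⟨b, rfl⟩ := hy
  have hab : b - a ≠ 0 := by
    intro h
    apply hxy
    have : a = b := by linarith [sub_eq_zero.1 h]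
    rw [this]
  have hyx : (p + b • v) - (p + a • v) = (b - a) • v := by
    ext i; simp [sub_smul]; ring
  ext z
  simp only [Set.mem_setOf_eq, hyx]
  constructor
  · rintro ⟨t, rfl⟩
    exact ⟨(t - a) / (b - a), by ext i; simp; field_simp; ring⟩
  · rintro ⟨s, rfl⟩
    exact ⟨a + s * (b - a), by ext i; simp; ring⟩

lemma inter_subsingleton {ℓ ℓ' : Set (Fin 3 → ℝ)} {v v' : Fin 3 → ℝ}
    (hl : IsLineWithDir ℓ v) (hl' : IsLineWithDir ℓ' v') (hne : ℓ ≠ ℓ') :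
    (ℓ ∩ ℓ').Subsingleton := by
  rintro x ⟨hx, hx'⟩ y ⟨hy, hy'⟩
  by_contra hxy
  exact absurd ((line_eq_of_two_mem hl hx hy hxy).trans
    (line_eq_of_two_mem hl' hx' hy' hxy).symm) hne

/-- The first two lines of a joint are distinct. -/
lemma joint_lines_ne {ℓ : Fin 3 → Set (Fin 3 → ℝ)} {v : Fin 3 → (Fin 3 → ℝ)}
    (hdir : ∀ i, IsLineWithDir (ℓ i) (v i)) (hli : LinearIndependent ℝ v)
    {i j : Fin 3} (hij : i ≠ j) : ℓ i ≠ ℓ j := by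
  intro heq
  obtain ⟨hvi, p, hp⟩ := hdir i
  obtain ⟨hvj, p', hp'⟩ := hdir j
  rw [heq, hp'] at hp
  -- now {x | ∃ t, x = p + t • v i} = {x | ∃ t, x = p' + t • v j}  (hp : reversed)
  have h0 : p ∈ {x | ∃ t : ℝ, x = p' + t • v j} := by rw [hp]; exact ⟨0, by simp⟩
  have h1 : p + v i ∈ {x | ∃ t : ℝ, x = p' + t • v j} := by rw [hp]; exact ⟨1, by simp⟩
  obtain ⟨a, ha⟩ := h0
  obtain ⟨b, hb⟩ := h1
  have : v i = (b - a) • v j := by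
    have := congrArg (fun z => z - p) hb
    simp only [add_sub_cancel_left] at this
    rw [this, ha]
    ext k; simp [sub_smul]; ring
  have h2 : v i - (b - a) • v j = 0 := by rw [this]; simp
  have := linearIndependent_iff'.1 hli Finset.univ
    (fun k => if k = i then 1 else if k = j then -(b - a) else 0)
  have h3 : ∑ k, (if k = i then (1:ℝ) else if k = j then -(b - a) else 0) • v k = 0 := by
    rw [Finset.sum_eq_add_of_mem i j (Finset.mem_univ i) (Finset.mem_univ j) hij ?_]
    · simp [hij, if_neg (Ne.symm hij)]
      rw [← h2]; ext k; simp; ring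
    · intro k _ hk
      simp [hk.1, hk.2]
  have h4 := this h3 i (Finset.mem_univ i)
  simp at h4

lemma joints_finite (L : Finset (Set (Fin 3 → ℝ))) (hL : ∀ ℓ ∈ L, IsLine ℓ) :
    {x | IsJoint L x}.Finite := by
  classical
  have hsub : {x | IsJoint L x} ⊆
      ⋃ p ∈ ((L ×ˢ L).filter (fun p => p.1 ≠ p.2) : Finset _), (p.1 ∩ p.2 : Set _) := by
    rintro x ⟨ℓ, v, hmem, hx, hdir, hli⟩
    have hne : ℓ 0 ≠ ℓ 1 := joint_lines_ne hdir hli (by decide)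
    refine Set.mem_iUnion.2 ⟨(ℓ 0, ℓ 1), Set.mem_iUnion.2 ⟨?_, Set.mem_inter (hx 0) (hx 1)⟩⟩
    rw [Finset.mem_filter, Finset.mem_product]
    exact ⟨⟨hmem 0, hmem 1⟩, hne⟩
  apply Set.Finite.subset _ hsub
  apply Set.Finite.biUnion (Finset.finite_toSet _)
  rintro ⟨a, b⟩ hab
  rw [Finset.mem_coe, Finset.mem_filter, Finset.mem_product] at hab
  obtain ⟨⟨ha, hb⟩, hne⟩ := hab
  obtain ⟨va, hva⟩ := hL a ha
  obtain ⟨vb, hvb⟩ := hL b hb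
  exact Set.Subsingleton.finite (inter_subsingleton hva hvb hne)

lemma joints_mono {L L' : Finset (Set (Fin 3 → ℝ))} (h : L' ⊆ L) :
    {x | IsJoint L' x} ⊆ {x | IsJoint L x} := by
  rintro x ⟨ℓ, v, hmem, hx, hdir, hli⟩
  exact ⟨ℓ, v, fun i => h (hmem i), hx, hdir, hli⟩

open scoped Classical in
lemma joints_erase {L : Finset (Set (Fin 3 → ℝ))} {ℓ₀ : Set (Fin 3 → ℝ)} :
    {x | IsJoint L x} ⊆ {x | IsJoint (L.erase ℓ₀) x} ∪ ({x | IsJoint L x} ∩ ℓ₀) := by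
  rintro x hx
  by_cases hxl : x ∈ ℓ₀
  · exact Or.inr ⟨hx, hxl⟩
  · obtain ⟨ℓ, v, hmem, hxm, hdir, hli⟩ := hx
    refine Or.inl ⟨ℓ, v, fun i => Finset.mem_erase.2 ⟨?_, hmem i⟩, hxm, hdir, hli⟩
    intro h; exact hxl (h ▸ hxm i)

noncomputable def expEmb (k : ℕ) (a : Fin 3 → Fin (k+1)) : Fin 3 →₀ ℕ :=
  Finsupp.equivFunOnFinite.symm (fun i => (a i : ℕ))

lemma expEmb_apply (k : ℕ) (a : Fin 3 → Fin (k+1)) (i : Fin 3) : expEmb k a i = (a i : ℕ) := rfl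

lemma expEmb_injective (k : ℕ) : Function.Injective (expEmb k) := by
  intro a b hab
  funext i
  have := congrArg (fun f => f i) hab
  simp only [expEmb_apply] at this
  exact Fin.val_injective this

lemma exists_vanishing_poly (S : Set (Fin 3 → ℝ)) (hS : S.Finite) (k : ℕ)
    (hk : S.ncard < (k+1)^3) :
    ∃ p : MvPolynomial (Fin 3) ℝ, p ≠ 0 ∧ p.totalDegree ≤ 3*k ∧
      ∀ x ∈ S, MvPolynomial.eval x p = 0 := by
  classical
  set T : Finset (Fin 3 → ℝ) := hS.toFinset with hT
  have hcardT : T.card = S.ncard := (Set.ncard_eq_toFinset_card S hS).symm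
  -- the evaluation linear map
  set Φ : ((Fin 3 → Fin (k+1)) → ℝ) →ₗ[ℝ] ({x // x ∈ T} → ℝ) :=
    { toFun := fun c x => ∑ a, c a * ∏ i, (x : Fin 3 → ℝ) i ^ (a i : ℕ)
      map_add' := by
        intro c c'
        funext x
        simp [add_mul, Finset.sum_add_distrib]
      map_smul' := by
        intro r c
        funext x
        simp [Finset.mul_sum, mul_assoc] } with hΦ
  have hnotinj : ¬ Function.Injective Φ := by
    intro hinj
    have hle := LinearMap.finrank_le_finrank_of_injective hinj
    rw [Module.finrank_fintype_fun_eq_card, Module.finrank_fintype_fun_eq_card] at hle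
    simp only [Fintype.card_fun, Fintype.card_fin, Fintype.card_coe] at hle
    omega
  have hker : LinearMap.ker Φ ≠ ⊥ := fun h => hnotinj (LinearMap.ker_eq_bot.1 h)
  obtain ⟨c, hcm, hcne⟩ := Submodule.exists_mem_ne_zero_of_ne_bot hker
  have hc0 : Φ c = 0 := LinearMap.mem_ker.1 hcm
  refine ⟨∑ a : Fin 3 → Fin (k+1), MvPolynomial.monomial (expEmb k a) (c a), ?_, ?_, ?_⟩
  · -- nonzero
    obtain ⟨a, ha⟩ := Function.ne_iff.1 hcne
    intro h0
    apply ha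
    have := congrArg (MvPolynomial.coeff (expEmb k a)) h0
    rw [MvPolynomial.coeff_sum] at this
    rw [Finset.sum_eq_single a (fun b _ hb => by
        rw [MvPolynomial.coeff_monomial, if_neg (fun h => hb (expEmb_injective k h))])
      (fun h => absurd (Finset.mem_univ a) h)] at this
    simpa [MvPolynomial.coeff_monomial] using this
  · -- degree
    refine (MvPolynomial.totalDegree_finset_sum _ _).trans (Finset.sup_le fun a _ => ?_)
    refine (MvPolynomial.totalDegree_monomial_le _ _).trans ?_
    have : (expEmb k a).sum (fun _ e => e) = ∑ i, (a i : ℕ) :=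
      Finsupp.sum_fintype _ _ (fun _ => rfl)
    show ((expEmb k a).sum fun _ e => e) ≤ 3 * k
    rw [this]
    calc ∑ i, (a i : ℕ) ≤ ∑ _i : Fin 3, k := Finset.sum_le_sum (fun i _ => Fin.is_le _)
      _ = 3 * k := by simp [Finset.sum_const, mul_comm]
  · -- vanishing
    intro x hx
    have hxT : x ∈ T := hS.mem_toFinset.2 hx
    have := congrArg (fun f => f (⟨x, hxT⟩ : {x // x ∈ T})) hc0
    simp only [hΦ, LinearMap.coe_mk, AddHom.coe_mk, Pi.zero_apply] at this
    rw [map_sum]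
    rw [← this]
    apply Finset.sum_congr rfl
    intro a _
    rw [MvPolynomial.eval_monomial]
    congr 1
    exact Finsupp.prod_fintype _ _ (fun i => pow_zero _)

lemma vanish_on_line_of_many_zeros {p : MvPolynomial (Fin 3) ℝ} (hp : p ≠ 0) {d : ℕ}
    (hdeg : p.totalDegree ≤ d) {ℓ : Set (Fin 3 → ℝ)} {v q : Fin 3 → ℝ} (hv : v ≠ 0)
    (hℓ : ℓ = {x | ∃ t : ℝ, x = q + t • v}) {S : Set (Fin 3 → ℝ)} (hS : S.Finite)
    (hvan : ∀ x ∈ S, MvPolynomial.eval x p = 0)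
    (hmany : ¬ (S ∩ ℓ).ncard ≤ d) :
    ∀ x ∈ ℓ, MvPolynomial.eval x p = 0 := by
  classical
  have hz : lineComp q v p = 0 := by
    by_contra hnz
    apply hmany
    -- map each point of S ∩ ℓ to a parameter which is a root
    have hroots : ∀ x ∈ S ∩ ℓ, ∃ t : ℝ, x = q + t • v ∧ (lineComp q v p).IsRoot t := by
      rintro x ⟨hxS, hxl⟩
      rw [hℓ] at hxl
      obtain ⟨t, rfl⟩ := hxl
      exact ⟨t, rfl, by rw [Polynomial.IsRoot, eval_lineComp]; exact hvan _ hxS⟩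
    choose f hf1 hf2 using hroots
    have hcard : (S ∩ ℓ).ncard ≤ ((lineComp q v p).roots.toFinset : Set ℝ).ncard := by
      apply Set.ncard_le_ncard_of_injOn (fun x => if h : x ∈ S ∩ ℓ then f x h else 0)
      · intro x hx
        simp only [dif_pos hx, Finset.coe_sort_coe, Multiset.mem_toFinset, Finset.mem_coe]
        exact Polynomial.mem_roots'.2 ⟨hnz, hf2 x hx⟩
      · intro x hx y hy hxy
        simp only [dif_pos hx, dif_pos hy] at hxy
        rw [hf1 x hx, hf1 y hy, hxy]
    refine hcard.trans ?_
    rw [Set.ncard_coe_finset]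
    exact (Multiset.toFinset_card_le _).trans
      ((Polynomial.card_roots' _).trans ((natDegree_lineComp_le q v p).trans hdeg))
  intro x hx
  rw [hℓ] at hx
  obtain ⟨t, rfl⟩ := hx
  rw [← eval_lineComp, hz]
  simp

lemma eval_dirDeriv (x v : Fin 3 → ℝ) (p : MvPolynomial (Fin 3) ℝ) :
    MvPolynomial.eval x (dirDeriv v p)
      = ∑ j, v j * MvPolynomial.eval x (MvPolynomial.pderiv j p) := by
  simp [dirDeriv]

lemma grad_vanish_at_joint {p : MvPolynomial (Fin 3) ℝ} {L : Finset (Set (Fin 3 → ℝ))}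
    (hvanlines : ∀ ℓ ∈ L, ∀ x ∈ ℓ, MvPolynomial.eval x p = 0)
    {x : Fin 3 → ℝ} (hx : IsJoint L x) :
    ∀ j, MvPolynomial.eval x (MvPolynomial.pderiv j p) = 0 := by
  obtain ⟨ℓ, v, hmem, hxm, hdir, hli⟩ := hx
  have key : ∀ i, MvPolynomial.eval x (dirDeriv (v i) p) = 0 := by
    intro i
    obtain ⟨hv, q, hq⟩ := hdir i
    have hline0 : lineComp q (v i) p = 0 := by
      apply Polynomial.eq_zero_of_infinite_isRoot
      apply Set.infinite_of_injective_forall_mem (f := fun t : ℝ => t)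
      · exact fun a b h => h
      · intro t
        rw [Set.mem_setOf_eq, Polynomial.IsRoot, eval_lineComp]
        exact hvanlines _ (hmem i) _ (hq ▸ ⟨t, rfl⟩)
    have hd0 : lineComp q (v i) (dirDeriv (v i) p) = 0 := by
      rw [lineComp_dirDeriv, hline0]
      simp
    have hxi := hxm i
    rw [hq] at hxi
    obtain ⟨t, ht⟩ := hxi
    rw [ht, ← eval_lineComp, hd0]
    simp
  -- linear functional vanishing on a basis
  set g : Fin 3 → ℝ := fun j => MvPolynomial.eval x (MvPolynomial.pderiv j p) with hg
  set F : (Fin 3 → ℝ) →ₗ[ℝ] ℝ :=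
    { toFun := fun u => ∑ j, u j * g j
      map_add' := by intro a b; simp [add_mul, Finset.sum_add_distrib]
      map_smul' := by intro r a; simp [Finset.mul_sum, mul_assoc] } with hF
  have hFv : ∀ i, F (v i) = 0 := by
    intro i
    have := key i
    rw [eval_dirDeriv] at this
    exact this
  have hcard : Fintype.card (Fin 3) = Module.finrank ℝ (Fin 3 → ℝ) := by
    simp [Module.finrank_fintype_fun_eq_card]
  let B := basisOfLinearIndependentOfCardEqFinrank hli hcard
  have hB : ⇑B = v := coe_basisOfLinearIndependentOfCardEqFinrank hli hcard
  have hF0 : F = 0 := by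
    apply B.ext
    intro i
    rw [hB]
    simpa using hFv i
  intro j
  have := congrArg (fun φ => φ (Pi.single j 1)) hF0
  simp only [hF, LinearMap.coe_mk, AddHom.coe_mk, LinearMap.zero_apply] at this
  rw [Finset.sum_eq_single j (fun b _ hb => by simp [Pi.single_apply, hb.symm]) (by simp)] at this
  simpa using this

lemma exists_low_line (L : Finset (Set (Fin 3 → ℝ))) (hL : ∀ ℓ ∈ L, IsLine ℓ)
    (hne : {x | IsJoint L x}.Nonempty) :
    ∃ ℓ ∈ L, ∃ d : ℕ, ({x | IsJoint L x} ∩ ℓ).ncard ≤ d ∧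
      (d : ℝ) ≤ 3 * ({x | IsJoint L x}.ncard : ℝ) ^ ((1:ℝ)/3) := by
  classical
  set S := {x | IsJoint L x} with hSdef
  have hSfin : S.Finite := joints_finite L hL
  set n := S.ncard with hn
  have hn1 : 1 ≤ n := (Set.ncard_pos hSfin).2 hne
  -- choose k ≈ n^{1/3}
  have hP : ∃ k : ℕ, n < (k+1)^3 :=
    ⟨n, lt_of_lt_of_le (Nat.lt_succ_self n) (Nat.le_self_pow (by norm_num) _)⟩
  set k := Nat.find hP with hk
  have hkn : n < (k+1)^3 := Nat.find_spec hP
  have hk3 : k^3 ≤ n := by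
    rcases Nat.eq_zero_or_pos k with h0 | hpos
    · rw [h0]; omega
    · have := Nat.find_min hP (m := k - 1) (by omega)
      push_neg at this
      calc k^3 = (k - 1 + 1)^3 := by congr 1; omega
        _ ≤ n := this
  -- minimal degree vanishing polynomial
  have hQ : ∃ e : ℕ, ∃ p : MvPolynomial (Fin 3) ℝ, p ≠ 0 ∧ p.totalDegree ≤ e ∧
      ∀ x ∈ S, MvPolynomial.eval x p = 0 :=
    ⟨3*k, exists_vanishing_poly S hSfin k hkn⟩
  set d := Nat.find hQ with hd
  obtain ⟨p, hpne, hpdeg, hpvan⟩ := Nat.find_spec hQ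
  have hd3k : d ≤ 3*k := Nat.find_min' hQ (exists_vanishing_poly S hSfin k hkn)
  have claim : ∃ ℓ ∈ L, (S ∩ ℓ).ncard ≤ d := by
    by_contra hcl
    push_neg at hcl
    have hvanlines : ∀ ℓ ∈ L, ∀ x ∈ ℓ, MvPolynomial.eval x p = 0 := by
      intro ℓ hℓ
      obtain ⟨v, hv, q, hq⟩ := hL ℓ hℓ
      exact vanish_on_line_of_many_zeros hpne hpdeg hv hq hSfin hpvan
        (by have := hcl ℓ hℓ; omega)
    have hpj : ∀ j, MvPolynomial.pderiv j p = 0 := by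
      intro j
      by_contra hj
      have hdegj := pderiv_ne_zero_totalDegree j p hj
      have : d - 1 < d := by omega
      apply Nat.find_min hQ this
      exact ⟨MvPolynomial.pderiv j p, hj, by omega,
        fun x hx => grad_vanish_at_joint hvanlines hx j⟩
    have hC := eq_C_of_pderiv_eq_zero p hpj
    obtain ⟨x₀, hx₀⟩ := hne
    have hz := hpvan x₀ hx₀
    rw [hC] at hz
    rw [MvPolynomial.eval_C] at hz
    rw [hC, hz] at hpne
    simp at hpne
  obtain ⟨ℓ, hℓ, hcount⟩ := claim
  refine ⟨ℓ, hℓ, d, hcount, ?_⟩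
  have hk13 : (k:ℝ) ≤ (n:ℝ) ^ ((1:ℝ)/3) := by
    have h2 : ((k:ℝ)^(3:ℕ)) ≤ (n:ℝ) := by
      have h1 : ((k^3 : ℕ):ℝ) ≤ (n:ℝ) := Nat.cast_le.2 hk3
      push_cast at h1 ⊢
      exact h1
    calc (k:ℝ) = (((k:ℝ)^(3:ℕ))) ^ ((1:ℝ)/3) := by
          rw [← Real.rpow_natCast (k:ℝ) 3, ← Real.rpow_mul (Nat.cast_nonneg k)]
          norm_num
      _ ≤ (n:ℝ)^((1:ℝ)/3) := Real.rpow_le_rpow (by positivity) h2 (by norm_num)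
  calc (d:ℝ) ≤ ((3*k:ℕ):ℝ) := Nat.cast_le.2 hd3k
    _ = 3*(k:ℝ) := by push_cast; ring
    _ ≤ 3 * (n:ℝ)^((1:ℝ)/3) := by linarith

lemma joints_ncard_le_aux (L : Finset (Set (Fin 3 → ℝ))) (hL : ∀ ℓ ∈ L, IsLine ℓ) :
    ∀ m : ℕ, ∀ L' : Finset (Set (Fin 3 → ℝ)), L'.card ≤ m → L' ⊆ L →
      (({x | IsJoint L' x}).ncard : ℝ)
        ≤ L'.card * (3 * (({x | IsJoint L x}).ncard : ℝ) ^ ((1:ℝ)/3)) := by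
  classical
  intro m
  induction m with
  | zero =>
    intro L' hc _
    have h0 : L' = ∅ := Finset.card_eq_zero.1 (Nat.le_zero.1 hc)
    subst h0
    have hset : {x | IsJoint (∅ : Finset (Set (Fin 3 → ℝ))) x} = ∅ := by
      ext x
      simp only [Set.mem_setOf_eq, Set.mem_empty_iff_false, iff_false]
      rintro ⟨ℓ, v, hmem, -⟩
      exact absurd (hmem 0) (Finset.notMem_empty _)
    rw [hset]
    simp
  | succ m ih =>
    intro L' hc hsub
    have hL' : ∀ ℓ ∈ L', IsLine ℓ := fun ℓ h => hL ℓ (hsub h)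
    by_cases hne : {x | IsJoint L' x}.Nonempty
    · obtain ⟨ℓ, hℓ, d, hcount, hdb⟩ := exists_low_line L' hL' hne
      have hJfinL : {x | IsJoint L x}.Finite := joints_finite L hL
      have hJfin' : {x | IsJoint L' x}.Finite := hJfinL.subset (joints_mono hsub)
      have hJfinE : {x | IsJoint (L'.erase ℓ) x}.Finite :=
        hJfinL.subset (joints_mono ((Finset.erase_subset _ _).trans hsub))
      -- d is bounded by the global K
      have hmono : ({x | IsJoint L' x}).ncard ≤ ({x | IsJoint L x}).ncard :=
        Set.ncard_le_ncard (joints_mono hsub) hJfinL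
      have hdK : (d : ℝ) ≤ 3 * (({x | IsJoint L x}).ncard : ℝ) ^ ((1:ℝ)/3) := by
        refine hdb.trans ?_
        have : (({x | IsJoint L' x}).ncard : ℝ) ^ ((1:ℝ)/3)
            ≤ (({x | IsJoint L x}).ncard : ℝ) ^ ((1:ℝ)/3) :=
          Real.rpow_le_rpow (by positivity) (Nat.cast_le.2 hmono) (by norm_num)
        linarith
      -- split the joints
      have hsplit : ({x | IsJoint L' x}).ncard
          ≤ ({x | IsJoint (L'.erase ℓ) x}).ncard + ({x | IsJoint L' x} ∩ ℓ).ncard := by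
        refine (Set.ncard_le_ncard joints_erase (hJfinE.union (hJfin'.subset
          Set.inter_subset_left))).trans ?_
        exact Set.ncard_union_le _ _
      have hcard1 : 1 ≤ L'.card := Finset.card_pos.2 ⟨ℓ, hℓ⟩
      have hIH := ih (L'.erase ℓ) (by rw [Finset.card_erase_of_mem hℓ]; omega)
        ((Finset.erase_subset _ _).trans hsub)
      rw [Finset.card_erase_of_mem hℓ] at hIH
      have hcast : ((L'.card - 1 : ℕ) : ℝ) = (L'.card : ℝ) - 1 := by
        rw [Nat.cast_sub hcard1]; norm_num
      rw [hcast] at hIH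
      set K := 3 * (({x | IsJoint L x}).ncard : ℝ) ^ ((1:ℝ)/3) with hK
      calc (({x | IsJoint L' x}).ncard : ℝ)
          ≤ (({x | IsJoint (L'.erase ℓ) x}).ncard : ℝ)
              + (({x | IsJoint L' x} ∩ ℓ).ncard : ℝ) := by exact_mod_cast hsplit
        _ ≤ ((L'.card : ℝ) - 1) * K + d := by
            have : (({x | IsJoint L' x} ∩ ℓ).ncard : ℝ) ≤ (d : ℝ) := Nat.cast_le.2 hcount
            linarith
        _ ≤ ((L'.card : ℝ) - 1) * K + K := by linarith
        _ = L'.card * K := by ring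
    · rw [Set.not_nonempty_iff_eq_empty] at hne
      rw [hne]
      simp only [Set.ncard_empty, Nat.cast_zero]
      positivity

/-- Any set of `N` lines in `ℝ³` forms at most `C·N^(3/2)` joints. -/
theorem joints_in_R3 :
    ∃ C : ℝ, 0 < C ∧ ∀ L : Finset (Set (Fin 3 → ℝ)),
      (∀ ℓ ∈ L, IsLine ℓ) →
      {x | IsJoint L x}.Finite ∧
      ({x | IsJoint L x}.ncard : ℝ) ≤ C * (L.card : ℝ) ^ ((3 : ℝ) / 2) := by
  refine ⟨6, by norm_num, fun L hL => ⟨joints_finite L hL, ?_⟩⟩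
  set j : ℝ := ({x | IsJoint L x}.ncard : ℝ) with hj
  have hj0 : 0 ≤ j := Nat.cast_nonneg _
  have hmain : j ≤ L.card * (3 * j ^ ((1:ℝ)/3)) :=
    joints_ncard_le_aux L hL L.card L (le_refl _) (Finset.Subset.refl _)
  rcases eq_or_lt_of_le hj0 with h0 | hpos
  · rw [← h0]
    positivity
  · -- j > 0
    have h13 : (0:ℝ) < j ^ ((1:ℝ)/3) := Real.rpow_pos_of_pos hpos _
    have h23 : j ^ ((2:ℝ)/3) * j ^ ((1:ℝ)/3) = j := by
      rw [← Real.rpow_add hpos]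
      norm_num
    have hstep : j ^ ((2:ℝ)/3) ≤ 3 * L.card := by
      have : j ^ ((2:ℝ)/3) * j ^ ((1:ℝ)/3) ≤ (3 * L.card) * j ^ ((1:ℝ)/3) := by
        rw [h23]; linarith
      exact le_of_mul_le_mul_right this h13
    have hfinal : j ≤ (3 * (L.card:ℝ)) ^ ((3:ℝ)/2) := by
      have h1 : (j ^ ((2:ℝ)/3)) ^ ((3:ℝ)/2) ≤ (3 * (L.card:ℝ)) ^ ((3:ℝ)/2) :=
        Real.rpow_le_rpow (by positivity) hstep (by norm_num)
      have h2 : (j ^ ((2:ℝ)/3)) ^ ((3:ℝ)/2) = j := by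
        rw [← Real.rpow_mul hj0]
        norm_num
      linarith [h2 ▸ h1]
    have hsplit : (3 * (L.card:ℝ)) ^ ((3:ℝ)/2)
        = (3:ℝ) ^ ((3:ℝ)/2) * (L.card:ℝ) ^ ((3:ℝ)/2) :=
      Real.mul_rpow (by norm_num) (Nat.cast_nonneg _)
    have h36 : (3:ℝ) ^ ((3:ℝ)/2) ≤ 6 := by
      have h1 : (3:ℝ) ^ ((3:ℝ)/2) = 3 * Real.sqrt 3 := by
        rw [Real.sqrt_eq_rpow, show ((3:ℝ)/2) = 1 + (1/2:ℝ) by norm_num,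
          Real.rpow_add (by norm_num), Real.rpow_one]
      have h4 : Real.sqrt 4 = 2 := by
        rw [show (4:ℝ) = 2^2 by norm_num, Real.sqrt_sq (by norm_num)]
      have h2 : Real.sqrt 3 ≤ 2 := by
        rw [← h4]
        exact Real.sqrt_le_sqrt (by norm_num)
      rw [h1]
      linarith
    have hN32 : (0:ℝ) ≤ (L.card:ℝ) ^ ((3:ℝ)/2) := by positivity
    calc j ≤ (3 * (L.card:ℝ)) ^ ((3:ℝ)/2) := hfinal
      _ = (3:ℝ) ^ ((3:ℝ)/2) * (L.card:ℝ) ^ ((3:ℝ)/2) := hsplit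
      _ ≤ 6 * (L.card : ℝ) ^ ((3:ℝ)/2) := by nlinarith
end

section
/- Let 𝓛₁, 𝓛₂, 𝓛₃ be finite sets of lines in ℝ³, let D ≥ 1 be an integer, and let P ∈ ℝ[x₁, x₂, x₃] be a nonzero polynomial of degree at most D. Let J' be the set of multijoints x lying on Z(P) = {y ∈ ℝ³ : P(y) = 0} for which there exist l₁ ∈ 𝓛₁, l₂ ∈ 𝓛₂, l₃ ∈ 𝓛₃ through x with linearly independent directions such that l₁ is not contained in Z(P). Then |J'| ≤ min(D·|𝓛₁|, |𝓛₂|·|𝓛₃|), and consequently |J'| ≤ D^{1/2}·(|𝓛₁|·|𝓛₂|·|𝓛₃|)^{1/2}. -/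
/-!
A point of `J'` lies on a witnessing line `l₁ ∈ 𝓛₁` not contained in `Z(P)`. Restricted to `l₁`,
`P` becomes a nonzero univariate polynomial of degree at most `D`, so each such line carries at
most `D` points of `J'`. The point also lies on lines `l₂ ∈ 𝓛₂`, `l₃ ∈ 𝓛₃` with independent
directions, and two such lines meet at most once, so `J'` injects into `𝓛₂ × 𝓛₃`. Finally
`x ≤ min(a, b)` gives `x ≤ √(ab)`.
-/

open MvPolynomial

/-- The real zero set of a polynomial. -/
def ZeroSet {n : ℕ} (P : MvPolynomial (Fin n) ℝ) : Set (Fin n → ℝ) :=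
  {x | eval x P = 0}

/-- The set of multijoints `x` on `Z(P)` for which some witnessing triple of lines
`l₁ ∈ 𝓛₁`, `l₂ ∈ 𝓛₂`, `l₃ ∈ 𝓛₃` through `x` with linearly independent directions has
`l₁` not contained in `Z(P)`. -/
def JPrime (𝓛₁ 𝓛₂ 𝓛₃ : Finset (Set (Fin 3 → ℝ))) (P : MvPolynomial (Fin 3) ℝ) :
    Set (Fin 3 → ℝ) :=
  {x | x ∈ ZeroSet P ∧
    ∃ l₁ ∈ 𝓛₁, ∃ l₂ ∈ 𝓛₂, ∃ l₃ ∈ 𝓛₃, x ∈ l₁ ∧ x ∈ l₂ ∧ x ∈ l₃ ∧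
      (∃ v : Fin 3 → (Fin 3 → ℝ),
        IsLineWithDir l₁ (v 0) ∧ IsLineWithDir l₂ (v 1) ∧ IsLineWithDir l₃ (v 2) ∧
        LinearIndependent ℝ v) ∧ ¬l₁ ⊆ ZeroSet P}

lemma MvPolynomial.natDegree_eval₂_C_le_totalDegree {σ R : Type*} [CommSemiring R]
    (P : MvPolynomial σ R) (f : σ → Polynomial R) (hf : ∀ i, (f i).natDegree ≤ 1) :
    (P.eval₂ Polynomial.C f).natDegree ≤ P.totalDegree := by
  rw [MvPolynomial.eval₂_eq]
  refine Polynomial.natDegree_sum_le_of_forall_le _ _ fun d hd => ?_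
  calc (Polynomial.C (P.coeff d) * ∏ i ∈ d.support, f i ^ d i).natDegree
      ≤ ∑ i ∈ d.support, (f i ^ d i).natDegree :=
        (Polynomial.natDegree_C_mul_le _ _).trans (Polynomial.natDegree_prod_le _ _)
    _ ≤ ∑ i ∈ d.support, d i := Finset.sum_le_sum fun i _ =>
        Polynomial.natDegree_pow_le.trans (by simpa using Nat.mul_le_mul_left (d i) (hf i))
    _ ≤ P.totalDegree := MvPolynomial.le_totalDegree hd

lemma MvPolynomial.exists_natDegree_le_eval_line {σ R : Type*} [CommRing R]
    (P : MvPolynomial σ R) (p v : σ → R) :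
    ∃ q : Polynomial R, q.natDegree ≤ P.totalDegree ∧ ∀ t, q.eval t = eval (p + t • v) P := by
  let f : σ → Polynomial R := fun i => Polynomial.C (p i) + Polynomial.C (v i) * Polynomial.X
  refine ⟨P.eval₂ Polynomial.C f, P.natDegree_eval₂_C_le_totalDegree f fun i => ?_, fun t => ?_⟩
  · simp only [f]
    compute_degree
  · rw [← Polynomial.coe_evalRingHom, MvPolynomial.eval₂_comp_left]
    change _ = eval₂ (RingHom.id R) _ P
    congr 1
    · ext a; simp
    · funext i
      simp only [Polynomial.coe_evalRingHom, Function.comp_apply, Polynomial.eval_add,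
        Polynomial.eval_C, Polynomial.eval_mul, Polynomial.eval_X, Pi.add_apply, Pi.smul_apply,
        smul_eq_mul, f]
      ring

theorem Set.encard_le_card_mul_of_subset_biUnion {α ι : Type*} {s : Set α} {I : Finset ι}
    {t : ι → Set α} {k : ℕ∞} (hs : s ⊆ ⋃ i ∈ I, t i) (ht : ∀ i ∈ I, (t i).encard ≤ k) :
    s.encard ≤ I.card * k :=
  calc s.encard ≤ ∑ i ∈ I, (t i).encard := (encard_le_encard hs).trans (I.set_encard_biUnion_le t)
    _ ≤ I.card * k := by simpa using Finset.sum_le_card_nsmul I _ k ht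

lemma le_sqrt_mul_of_le_of_le {x a b : ℝ} (hx : 0 ≤ x) (ha : x ≤ a) (hb : x ≤ b) :
    x ≤ √(a * b) :=
  (Real.le_sqrt hx (mul_nonneg (hx.trans ha) (hx.trans hb))).mpr
    (pow_two x ▸ mul_le_mul ha hb hx (hx.trans ha))

namespace IsLineWithDir

variable {n : ℕ} {ℓ ℓ' : Set (Fin n → ℝ)} {v w : Fin n → ℝ}

lemma encard_inter_zeroSet_le (h : IsLineWithDir ℓ v) {P : MvPolynomial (Fin n) ℝ}
    (hP : ¬ ℓ ⊆ ZeroSet P) : (ℓ ∩ ZeroSet P).encard ≤ P.totalDegree := by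
  obtain ⟨-, p, rfl⟩ := h
  obtain ⟨q, hq_deg, hq_eval⟩ := P.exists_natDegree_le_eval_line p v
  have hq : q ≠ 0 := by
    rintro rfl
    obtain ⟨_, ⟨t, rfl⟩, ht⟩ := Set.not_subset.mp hP
    exact ht (show eval (p + t • v) P = 0 by simp [← hq_eval])
  have hsub : {x | ∃ t : ℝ, x = p + t • v} ∩ ZeroSet P ⊆
      (fun t : ℝ => p + t • v) '' (q.roots.toFinset : Set ℝ) := by
    rintro _ ⟨⟨t, rfl⟩, ht⟩
    refine ⟨t, ?_, rfl⟩
    rwa [Finset.mem_coe, Multiset.mem_toFinset, Polynomial.mem_roots hq, Polynomial.IsRoot,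
      hq_eval]
  calc _ ≤ ((fun t : ℝ => p + t • v) '' (q.roots.toFinset : Set ℝ)).encard :=
        Set.encard_le_encard hsub
    _ ≤ q.roots.toFinset.card := 
        (Set.encard_image_le _ _).trans_eq (Set.encard_coe_eq_coe_finsetCard _)
    _ ≤ P.totalDegree := by
        exact_mod_cast (Multiset.toFinset_card_le _).trans (q.card_roots'.trans hq_deg)

lemma exists_sub_eq_smul (h : IsLineWithDir ℓ v) {x y : Fin n → ℝ} (hx : x ∈ ℓ) (hy : y ∈ ℓ) :
    ∃ s : ℝ, x - y = s • v := by
  obtain ⟨-, p, rfl⟩ := h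
  obtain ⟨s, rfl⟩ := hx
  obtain ⟨t, rfl⟩ := hy
  exact ⟨s - t, by rw [sub_smul]; abel⟩

lemma inter_subsingleton (h : IsLineWithDir ℓ v) (h' : IsLineWithDir ℓ' w)
    (hvw : LinearIndependent ℝ ![v, w]) : (ℓ ∩ ℓ').Subsingleton := by
  rintro x ⟨hxℓ, hxℓ'⟩ y ⟨hyℓ, hyℓ'⟩
  obtain ⟨s, hs⟩ := h.exists_sub_eq_smul hxℓ hyℓ
  obtain ⟨t, ht⟩ := h'.exists_sub_eq_smul hxℓ' hyℓ'
  have hs0 : s = 0 := (LinearIndependent.pair_iff.mp hvw s (-t) (by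
    rw [← hs, neg_smul, ← ht, add_neg_cancel])).1
  rw [← sub_eq_zero, hs, hs0, zero_smul]

end IsLineWithDir

section JPrime

variable (𝓛₁ 𝓛₂ 𝓛₃ : Finset (Set (Fin 3 → ℝ))) (P : MvPolynomial (Fin 3) ℝ)

lemma encard_JPrime_le_totalDegree_mul_card :
    (JPrime 𝓛₁ 𝓛₂ 𝓛₃ P).encard ≤ ↑(P.totalDegree * 𝓛₁.card) := by
  classical
  have hcover : JPrime 𝓛₁ 𝓛₂ 𝓛₃ P ⊆
      ⋃ ℓ ∈ 𝓛₁.filter (fun ℓ => IsLine ℓ ∧ ¬ ℓ ⊆ ZeroSet P), ℓ ∩ ZeroSet P := by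
    rintro x ⟨hxP, ℓ₁, hℓ₁, -, -, -, -, hxℓ₁, -, -, ⟨v, hv₀, -⟩, hℓ₁P⟩
    exact Set.mem_biUnion (Finset.mem_filter.mpr ⟨hℓ₁, ⟨_, hv₀⟩, hℓ₁P⟩) ⟨hxℓ₁, hxP⟩
  calc _ ≤ (𝓛₁.filter _).card * (P.totalDegree : ℕ∞) :=
        Set.encard_le_card_mul_of_subset_biUnion hcover fun ℓ hℓ => by
          obtain ⟨-, ⟨v, hv⟩, hℓP⟩ := Finset.mem_filter.mp hℓ
          exact hv.encard_inter_zeroSet_le hℓP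
    _ ≤ ↑(P.totalDegree * 𝓛₁.card) := by
        rw [mul_comm, Nat.cast_mul]
        gcongr
        exact Finset.filter_subset _ _

lemma encard_JPrime_le_card_mul_card :
    (JPrime 𝓛₁ 𝓛₂ 𝓛₃ P).encard ≤ ↑(𝓛₂.card * 𝓛₃.card) := by
  classical
  have hcover : JPrime 𝓛₁ 𝓛₂ 𝓛₃ P ⊆
      ⋃ L ∈ (𝓛₂ ×ˢ 𝓛₃).filter (fun L => ∃ v w, IsLineWithDir L.1 v ∧ IsLineWithDir L.2 w ∧
        LinearIndependent ℝ ![v, w]), L.1 ∩ L.2 := by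
    rintro x ⟨-, -, -, ℓ₂, hℓ₂, ℓ₃, hℓ₃, -, hxℓ₂, hxℓ₃, ⟨v, -, hv₁, hv₂, hv⟩, -⟩
    have hv₁₂ : LinearIndependent ℝ ![v 1, v 2] := by
      convert hv.comp ![1, 2] (by decide) using 1
      ext i
      fin_cases i <;> rfl
    exact Set.mem_biUnion (x := (ℓ₂, ℓ₃))
      (Finset.mem_filter.mpr ⟨Finset.mem_product.mpr ⟨hℓ₂, hℓ₃⟩, _, _, hv₁, hv₂, hv₁₂⟩)
      ⟨hxℓ₂, hxℓ₃⟩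
  calc _ ≤ ((𝓛₂ ×ˢ 𝓛₃).filter _).card * (1 : ℕ∞) :=
        Set.encard_le_card_mul_of_subset_biUnion hcover fun L hL => by
          obtain ⟨-, v, w, hv, hw, hvw⟩ := Finset.mem_filter.mp hL
          exact Set.encard_le_one_iff_subsingleton.mpr (hv.inter_subsingleton hw hvw)
    _ ≤ ↑(𝓛₂.card * 𝓛₃.card) := by
        rw [mul_one, ← Finset.card_product]
        gcongr
        exact Finset.filter_subset _ _

end JPrime

theorem multijoints_on_zero_set_general (𝓛₁ 𝓛₂ 𝓛₃ : Finset (Set (Fin 3 → ℝ)))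
    (D : ℕ) (P : MvPolynomial (Fin 3) ℝ) (hdeg : P.totalDegree ≤ D) :
    (JPrime 𝓛₁ 𝓛₂ 𝓛₃ P).Finite ∧
    ((JPrime 𝓛₁ 𝓛₂ 𝓛₃ P).ncard : ℝ) ≤
      min ((D : ℝ) * 𝓛₁.card) ((𝓛₂.card : ℝ) * 𝓛₃.card) ∧
    ((JPrime 𝓛₁ 𝓛₂ 𝓛₃ P).ncard : ℝ) ≤
      (D : ℝ) ^ ((1 : ℝ) / 2) * ((𝓛₁.card : ℝ) * 𝓛₂.card * 𝓛₃.card) ^ ((1 : ℝ) / 2) := by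
  have h₁ : (JPrime 𝓛₁ 𝓛₂ 𝓛₃ P).encard ≤ ↑(D * 𝓛₁.card) :=
    (encard_JPrime_le_totalDegree_mul_card 𝓛₁ 𝓛₂ 𝓛₃ P).trans (by gcongr)
  obtain ⟨hfin, hN₁⟩ := Set.encard_le_coe_iff_finite_ncard_le.mp h₁
  have hN₂ := (Set.encard_le_coe_iff_finite_ncard_le.mp
    (encard_JPrime_le_card_mul_card 𝓛₁ 𝓛₂ 𝓛₃ P)).2
  have hN₁' : ((JPrime 𝓛₁ 𝓛₂ 𝓛₃ P).ncard : ℝ) ≤ D * 𝓛₁.card := by exact_mod_cast hN₁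
  have hN₂' : ((JPrime 𝓛₁ 𝓛₂ 𝓛₃ P).ncard : ℝ) ≤ 𝓛₂.card * 𝓛₃.card := by exact_mod_cast hN₂
  refine ⟨hfin, le_min hN₁' hN₂', ?_⟩
  rw [← Real.mul_rpow (by positivity) (by positivity), ← Real.sqrt_eq_rpow,
    show (D : ℝ) * (𝓛₁.card * 𝓛₂.card * 𝓛₃.card) = D * 𝓛₁.card * (𝓛₂.card * 𝓛₃.card) by ring]
  exact le_sqrt_mul_of_le_of_le (Nat.cast_nonneg _) hN₁' hN₂'

/-- Multijoints on the zero set of a polynomial whose witnessing line from `𝓛₁` is not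
contained in the zero set: `|J'| ≤ min(D|𝓛₁|, |𝓛₂||𝓛₃|)`, hence
`|J'| ≤ D^(1/2)(|𝓛₁||𝓛₂||𝓛₃|)^(1/2)`. -/
theorem multijoints_on_zero_set (𝓛₁ 𝓛₂ 𝓛₃ : Finset (Set (Fin 3 → ℝ)))
    (h₁ : ∀ ℓ ∈ 𝓛₁, IsLine ℓ) (h₂ : ∀ ℓ ∈ 𝓛₂, IsLine ℓ) (h₃ : ∀ ℓ ∈ 𝓛₃, IsLine ℓ)
    (D : ℕ) (hD : 1 ≤ D) (P : MvPolynomial (Fin 3) ℝ) (hP : P ≠ 0)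
    (hdeg : P.totalDegree ≤ D) :
    (JPrime 𝓛₁ 𝓛₂ 𝓛₃ P).Finite ∧
    ((JPrime 𝓛₁ 𝓛₂ 𝓛₃ P).ncard : ℝ) ≤
      min ((D : ℝ) * 𝓛₁.card) ((𝓛₂.card : ℝ) * 𝓛₃.card) ∧
    ((JPrime 𝓛₁ 𝓛₂ 𝓛₃ P).ncard : ℝ) ≤
      (D : ℝ) ^ ((1 : ℝ) / 2) * ((𝓛₁.card : ℝ) * 𝓛₂.card * 𝓛₃.card) ^ ((1 : ℝ) / 2) :=
  multijoints_on_zero_set_general 𝓛₁ 𝓛₂ 𝓛₃ D P hdeg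
end

section
/- Let n ≥ 2 and let 𝓛₁,…,𝓛ₙ be pairwise disjoint transversal finite collections of lines in ℝⁿ with |𝓛_i| = L_i, and suppose L₁ ≤ 100. For a point x let N_i(x) denote the number of lines of 𝓛_i through x, and call x a joint if at least one line from each collection passes through x. Then the sum over all joints x of (N₁(x)·N₂(x)⋯Nₙ(x))^{1/(n−1)} is at most 100·(L₁·L₂⋯Lₙ)^{1/(n−1)}. -/
open Classical

/-- The number of lines of the collection `L` passing through `x`. -/
noncomputable def linesThrough {n : ℕ} (L : Finset (Set (Fin n → ℝ))) (x : Fin n → ℝ) : ℕ :=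
  (L.filter (fun ℓ => x ∈ ℓ)).card

/-- The collections `𝓛 i` of lines in `ℝⁿ` are transversal: whenever `n` lines,
one from each collection, pass through a common point, their direction vectors are
linearly independent. -/
def Transversal {n : ℕ} (𝓛 : Fin n → Finset (Set (Fin n → ℝ))) : Prop :=
  ∀ (x : Fin n → ℝ) (ℓ : Fin n → Set (Fin n → ℝ)) (v : Fin n → (Fin n → ℝ)),
    (∀ i, ℓ i ∈ 𝓛 i) → (∀ i, x ∈ ℓ i) → (∀ i, IsLineWithDir (ℓ i) (v i)) →
    LinearIndependent ℝ v

/-- `x` is a joint: at least one line from each collection passes through `x`. -/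
def IsJointPt {n : ℕ} (𝓛 : Fin n → Finset (Set (Fin n → ℝ))) (x : Fin n → ℝ) : Prop :=
  ∃ ℓ : Fin n → Set (Fin n → ℝ), (∀ i, ℓ i ∈ 𝓛 i) ∧ ∀ i, x ∈ ℓ i

/-! Since `N₁(x)^{1/(n-1)} ≤ N₁(x)`, the sum is at most the sum, over the lines `ℓ` of `𝓛₁`, of
`∑_{joints x ∈ ℓ} ∏_{i ≥ 2} Nᵢ(x)^{1/(n-1)}`. A line of another collection meets `ℓ` at most once,
so `∑_{x ∈ ℓ} Nᵢ(x) ≤ Lᵢ`, and Hölder's inequality with `n - 1` equal exponents bounds the inner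
sum by `∏_{i ≥ 2} Lᵢ^{1/(n-1)}`. There are at most 100 lines in `𝓛₁`. -/

theorem Real.sum_prod_rpow_le_prod_sum_rpow {α ι : Type*} (s : Finset α) (t : Finset ι)
    {w : ι → ℝ} (hw : ∀ i ∈ t, 0 ≤ w i) (hw₁ : ∑ i ∈ t, w i = 1)
    {f : ι → α → ℝ} (hf : ∀ i ∈ t, ∀ x ∈ s, 0 ≤ f i x) :
    ∑ x ∈ s, ∏ i ∈ t, f i x ^ w i ≤ ∏ i ∈ t, (∑ x ∈ s, f i x) ^ w i := by
  set S : ι → ℝ := fun i => ∑ x ∈ s, f i x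
  have hS : ∀ i ∈ t, 0 ≤ S i := fun i hi => Finset.sum_nonneg (hf i hi)
  set P := ∏ i ∈ t, S i ^ w i
  have hP : 0 ≤ P := Finset.prod_nonneg fun i hi => Real.rpow_nonneg (hS i hi) _
  -- `S i = 0` forces `f i x = 0`, so the normalisation `f i x / S i` loses nothing.
  have hnormalize : ∀ x ∈ s, ∏ i ∈ t, f i x ^ w i = P * ∏ i ∈ t, (f i x / S i) ^ w i := by
    intro x hx
    rw [← Finset.prod_mul_distrib]
    refine Finset.prod_congr rfl fun i hi => ?_
    rw [← Real.mul_rpow (hS i hi) (div_nonneg (hf i hi x hx) (hS i hi)),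
      mul_div_cancel_of_imp' fun h0 => (Finset.sum_eq_zero_iff_of_nonneg (hf i hi)).1 h0 x hx]
  have hamgm : ∀ x ∈ s, ∏ i ∈ t, (f i x / S i) ^ w i ≤ ∑ i ∈ t, w i * (f i x / S i) :=
    fun x hx => Real.geom_mean_le_arith_mean_weighted t w _ hw hw₁
      fun i hi => div_nonneg (hf i hi x hx) (hS i hi)
  have hmeans : ∑ x ∈ s, ∑ i ∈ t, w i * (f i x / S i) ≤ 1 := by
    rw [Finset.sum_comm, ← hw₁]
    refine Finset.sum_le_sum fun i hi => ?_
    rw [← Finset.mul_sum, ← Finset.sum_div]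
    exact mul_le_of_le_one_right (hw i hi) (div_self_le_one _)
  calc ∑ x ∈ s, ∏ i ∈ t, f i x ^ w i
      = P * ∑ x ∈ s, ∏ i ∈ t, (f i x / S i) ^ w i := by
        rw [Finset.mul_sum]; exact Finset.sum_congr rfl hnormalize
    _ ≤ P * ∑ x ∈ s, ∑ i ∈ t, w i * (f i x / S i) := by gcongr with x hx; exact hamgm x hx
    _ ≤ P := mul_le_of_le_one_right hP hmeans

theorem IsLine.eq_setOf_of_mem {n : ℕ} {ℓ : Set (Fin n → ℝ)} (h : IsLine ℓ) {x y : Fin n → ℝ}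
    (hx : x ∈ ℓ) (hy : y ∈ ℓ) (hxy : x ≠ y) :
    ℓ = {z | ∃ t : ℝ, z = x + t • (y - x)} := by
  obtain ⟨v, -, p, rfl⟩ := h
  obtain ⟨a, rfl⟩ := hx
  obtain ⟨b, rfl⟩ := hy
  have hab : b - a ≠ 0 := sub_ne_zero.2 fun hba => hxy (by rw [hba])
  have hdiff : (p + b • v) - (p + a • v) = (b - a) • v := by module
  ext z
  simp only [Set.mem_ofPred_eq, hdiff]
  constructor
  · rintro ⟨t, rfl⟩
    refine ⟨(t - a) / (b - a), ?_⟩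
    rw [smul_smul, div_mul_cancel₀ _ hab]
    module
  · rintro ⟨s, rfl⟩
    exact ⟨a + s * (b - a), by module⟩

theorem IsLine.inter_subsingleton {n : ℕ} {ℓ ℓ' : Set (Fin n → ℝ)} (h : IsLine ℓ)
    (h' : IsLine ℓ') (hne : ℓ ≠ ℓ') : (ℓ ∩ ℓ').Subsingleton := by
  intro x hx y hy
  by_contra hxy
  exact hne ((h.eq_setOf_of_mem hx.1 hy.1 hxy).trans (h'.eq_setOf_of_mem hx.2 hy.2 hxy).symm)

theorem finite_setOf_isJointPt {n : ℕ} {𝓛 : Fin n → Finset (Set (Fin n → ℝ))} {i j : Fin n}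
    (hi : ∀ ℓ ∈ 𝓛 i, IsLine ℓ) (hj : ∀ ℓ ∈ 𝓛 j, IsLine ℓ) (hdisj : Disjoint (𝓛 i) (𝓛 j)) :
    {x | IsJointPt 𝓛 x}.Finite := by
  have hsub : {x | IsJointPt 𝓛 x} ⊆ ⋃ ℓ ∈ (𝓛 i : Set _), ⋃ ℓ' ∈ (𝓛 j : Set _), ℓ ∩ ℓ' :=
    fun x ⟨ℓ, hmem, hthru⟩ =>
      Set.mem_biUnion (hmem i) (Set.mem_biUnion (hmem j) ⟨hthru i, hthru j⟩)
  refine Set.Finite.subset ((𝓛 i).finite_toSet.biUnion fun ℓ hℓ =>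
    (𝓛 j).finite_toSet.biUnion fun ℓ' hℓ' => ?_) hsub
  exact ((hi ℓ hℓ).inter_subsingleton (hj ℓ' hℓ')
    fun h => Finset.disjoint_left.1 hdisj hℓ (h ▸ hℓ')).finite

theorem sum_linesThrough_mul {n : ℕ} {R : Type*} [NonAssocSemiring R]
    (L : Finset (Set (Fin n → ℝ))) (S : Finset (Fin n → ℝ)) (g : (Fin n → ℝ) → R) :
    ∑ x ∈ S, (linesThrough L x : R) * g x = ∑ ℓ ∈ L, ∑ x ∈ S.filter (· ∈ ℓ), g x := by
  simpa only [Finset.sum_const, nsmul_eq_mul, linesThrough, Finset.bipartiteAbove,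
    Finset.bipartiteBelow] using
    Finset.sum_sum_bipartiteAbove_eq_sum_sum_bipartiteBelow (s := S) (t := L) (r := (· ∈ ·))
      (fun x _ => g x)

theorem sum_linesThrough_le_card {n : ℕ} {L : Finset (Set (Fin n → ℝ))}
    (hL : ∀ ℓ ∈ L, IsLine ℓ) {ℓ₀ : Set (Fin n → ℝ)} (hℓ₀ : IsLine ℓ₀) (hℓ₀L : ℓ₀ ∉ L)
    {S : Finset (Fin n → ℝ)} (hS : ∀ x ∈ S, x ∈ ℓ₀) :
    ∑ x ∈ S, (linesThrough L x : ℝ) ≤ L.card := by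
  have hmeet : ∀ ℓ ∈ L, (S.filter (· ∈ ℓ)).card ≤ 1 := fun ℓ hℓ =>
    Finset.card_le_one.2 fun x hx y hy =>
      (hL ℓ hℓ).inter_subsingleton hℓ₀ (fun h => hℓ₀L (h ▸ hℓ))
        ⟨(Finset.mem_filter.1 hx).2, hS x (Finset.mem_filter.1 hx).1⟩
        ⟨(Finset.mem_filter.1 hy).2, hS y (Finset.mem_filter.1 hy).1⟩
  calc ∑ x ∈ S, (linesThrough L x : ℝ)
      = ∑ ℓ ∈ L, ((S.filter (· ∈ ℓ)).card : ℝ) := by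
        simpa using sum_linesThrough_mul L S (fun _ => (1 : ℝ))
    _ ≤ ∑ _ℓ ∈ L, (1 : ℝ) := Finset.sum_le_sum fun ℓ hℓ => by exact_mod_cast hmeet ℓ hℓ
    _ = L.card := by simp

theorem sum_prod_linesThrough_rpow_le {n : ℕ} {ι : Type*} {𝓛 : ι → Finset (Set (Fin n → ℝ))}
    {t : Finset ι} {w : ι → ℝ} (hw : ∀ i ∈ t, 0 ≤ w i) (hw₁ : ∑ i ∈ t, w i = 1)
    (hlines : ∀ i ∈ t, ∀ ℓ ∈ 𝓛 i, IsLine ℓ) {ℓ₀ : Set (Fin n → ℝ)} (hℓ₀ : IsLine ℓ₀)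
    (hℓ₀𝓛 : ∀ i ∈ t, ℓ₀ ∉ 𝓛 i) {S : Finset (Fin n → ℝ)} (hS : ∀ x ∈ S, x ∈ ℓ₀) :
    ∑ x ∈ S, ∏ i ∈ t, (linesThrough (𝓛 i) x : ℝ) ^ w i ≤ ∏ i ∈ t, ((𝓛 i).card : ℝ) ^ w i := by
  have hsum_nonneg : ∀ i, 0 ≤ ∑ x ∈ S, (linesThrough (𝓛 i) x : ℝ) := fun i =>
    Finset.sum_nonneg fun _ _ => Nat.cast_nonneg _
  refine (Real.sum_prod_rpow_le_prod_sum_rpow S t hw hw₁ fun _ _ _ _ => Nat.cast_nonneg _).trans ?_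
  refine Finset.prod_le_prod (fun i _ => Real.rpow_nonneg (hsum_nonneg i) _) fun i hi => ?_
  exact Real.rpow_le_rpow (hsum_nonneg i)
    (sum_linesThrough_le_card (hlines i hi) hℓ₀ (hℓ₀𝓛 i hi) hS) (hw i hi)

theorem Nat.cast_rpow_le_self (a : ℕ) {e : ℝ} (he₀ : 0 < e) (he₁ : e ≤ 1) :
    (a : ℝ) ^ e ≤ a := by
  rcases a.eq_zero_or_pos with rfl | ha
  · simp [Real.zero_rpow he₀.ne']
  · exact Real.rpow_le_self_of_one_le (by exact_mod_cast ha) he₁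

theorem Nat.cast_le_mul_rpow {a : ℕ} {C e : ℝ} (h : (a : ℝ) ≤ C) (he : 0 ≤ e) :
    (a : ℝ) ≤ C * (a : ℝ) ^ e := by
  rcases a.eq_zero_or_pos with rfl | ha
  · rw [Nat.cast_zero] at h ⊢
    exact mul_nonneg h (Real.rpow_nonneg le_rfl e)
  · exact h.trans (le_mul_of_one_le_right ((Nat.cast_nonneg a).trans h)
      (Real.one_le_rpow (by exact_mod_cast ha) he))

theorem rpow_prod_le_mul_prod_erase_rpow {ι : Type*} [DecidableEq ι] {s : Finset ι} {i₀ : ι}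
    (hi₀ : i₀ ∈ s) (a : ι → ℕ) {e : ℝ} (he₀ : 0 < e) (he₁ : e ≤ 1) :
    (∏ i ∈ s, (a i : ℝ)) ^ e ≤ a i₀ * ∏ i ∈ s.erase i₀, (a i : ℝ) ^ e := by
  rw [← Real.finsetProd_rpow s _ (fun i _ => Nat.cast_nonneg _), ← Finset.mul_prod_erase s _ hi₀]
  exact mul_le_mul_of_nonneg_right (Nat.cast_rpow_le_self _ he₀ he₁)
    (Finset.prod_nonneg fun i _ => Real.rpow_nonneg (Nat.cast_nonneg _) e)

theorem Fin.sum_erase_one_div_sub_one {n : ℕ} (hn : 1 < n) (i₀ : Fin n) :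
    ∑ _i ∈ Finset.univ.erase i₀, (1 : ℝ) / ((n : ℝ) - 1) = 1 := by
  have hn₁ : (1 : ℝ) < n := by exact_mod_cast hn
  rw [Finset.sum_const, Finset.card_erase_of_mem (Finset.mem_univ _), Finset.card_univ,
    Fintype.card_fin, nsmul_eq_mul, Nat.cast_sub hn.le, Nat.cast_one]
  exact mul_one_div_cancel (by linarith)

/-- Base case of multijoints with multiplicities: if the collections are pairwise
disjoint and transversal with `|𝓛₁| ≤ 100`, then
`∑_joints (∏ᵢ Nᵢ(x))^(1/(n-1)) ≤ 100 (∏ᵢ Lᵢ)^(1/(n-1))`. -/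
theorem multijoints_with_multiplicities_base_case (n : ℕ) (hn : 2 ≤ n)
    (𝓛 : Fin n → Finset (Set (Fin n → ℝ)))
    (hlines : ∀ i, ∀ ℓ ∈ 𝓛 i, IsLine ℓ)
    (hdisj : ∀ i j, i ≠ j → Disjoint (𝓛 i) (𝓛 j))
    (hsmall : (𝓛 ⟨0, by omega⟩).card ≤ 100) :
    ∃ J : Finset (Fin n → ℝ),
      (∀ x, x ∈ J ↔ IsJointPt 𝓛 x) ∧
      ∑ x ∈ J, (∏ i, (linesThrough (𝓛 i) x : ℝ)) ^ ((1 : ℝ) / ((n : ℝ) - 1)) ≤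
        100 * (∏ i, ((𝓛 i).card : ℝ)) ^ ((1 : ℝ) / ((n : ℝ) - 1)) := by
  set i₀ : Fin n := ⟨0, by omega⟩
  have hi₀ : i₀ ≠ ⟨1, by omega⟩ := by simp [i₀, Fin.ext_iff]
  have hfin := finite_setOf_isJointPt (hlines i₀) (hlines _) (hdisj _ _ hi₀)
  refine ⟨hfin.toFinset, fun x => hfin.mem_toFinset, ?_⟩
  set e : ℝ := (1 : ℝ) / ((n : ℝ) - 1)
  have hn₁ : (1 : ℝ) ≤ (n : ℝ) - 1 := by
    have : (2 : ℝ) ≤ n := by exact_mod_cast hn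
    linarith
  have he₀ : 0 < e := one_div_pos.2 (by linarith)
  have he₁ : e ≤ 1 := div_le_one_of_le₀ hn₁ (by linarith)
  have hw₁ : ∑ _i ∈ Finset.univ.erase i₀, e = 1 := Fin.sum_erase_one_div_sub_one hn i₀
  set Q := ∏ i ∈ Finset.univ.erase i₀, ((𝓛 i).card : ℝ) ^ e
  calc ∑ x ∈ hfin.toFinset, (∏ i, (linesThrough (𝓛 i) x : ℝ)) ^ e
      ≤ ∑ x ∈ hfin.toFinset, (linesThrough (𝓛 i₀) x : ℝ) *
          ∏ i ∈ Finset.univ.erase i₀, (linesThrough (𝓛 i) x : ℝ) ^ e :=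
        Finset.sum_le_sum fun x _ =>
          rpow_prod_le_mul_prod_erase_rpow (Finset.mem_univ i₀) _ he₀ he₁
    _ = ∑ ℓ₀ ∈ 𝓛 i₀, ∑ x ∈ hfin.toFinset.filter (· ∈ ℓ₀),
          ∏ i ∈ Finset.univ.erase i₀, (linesThrough (𝓛 i) x : ℝ) ^ e :=
        sum_linesThrough_mul _ _ _
    _ ≤ ∑ _ℓ₀ ∈ 𝓛 i₀, Q := Finset.sum_le_sum fun ℓ₀ hℓ₀ =>
        sum_prod_linesThrough_rpow_le (fun _ _ => he₀.le) hw₁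
          (fun i _ => hlines i) (hlines i₀ ℓ₀ hℓ₀)
          (fun i hi h => Finset.disjoint_left.1 (hdisj i₀ i (Finset.ne_of_mem_erase hi).symm)
            hℓ₀ h)
          fun x hx => (Finset.mem_filter.1 hx).2
    _ = (𝓛 i₀).card * Q := by rw [Finset.sum_const, nsmul_eq_mul]
    _ ≤ 100 * ((𝓛 i₀).card : ℝ) ^ e * Q :=
        mul_le_mul_of_nonneg_right (Nat.cast_le_mul_rpow (by exact_mod_cast hsmall) he₀.le)
          (Finset.prod_nonneg fun i _ => Real.rpow_nonneg (Nat.cast_nonneg _) e)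
    _ = 100 * (∏ i, ((𝓛 i).card : ℝ)) ^ e := by
        rw [mul_assoc, ← Real.finsetProd_rpow _ _ (fun i _ => Nat.cast_nonneg _),
          ← Finset.mul_prod_erase Finset.univ _ (Finset.mem_univ i₀)]
end

section
/- Let n ≥ 2, k ≥ 2, and let α₁,…,α_k be positive integers with α₁ + ⋯ + α_k = n. Then for every positive integer S there exist finite families 𝒮₁,…,𝒮_k, where 𝒮_i consists of S^{k−1} affine subspaces of ℝⁿ each of dimension α_i, such that the number of points x ∈ ℝⁿ at which some subspace from each family passes through x with the direction subspaces of the chosen subspaces spanning ℝⁿ is at least S^{k} = (|𝒮₁|·|𝒮₂|⋯|𝒮_k|)^{1/(k−1)}. -/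
/-- `P` is an affine subspace of `ℝⁿ` with direction the linear subspace `W`. -/
def IsAffineWithDir {n : ℕ} (P : Set (Fin n → ℝ)) (W : Submodule ℝ (Fin n → ℝ)) : Prop :=
  ∃ p : Fin n → ℝ, P = {x | ∃ w ∈ W, x = p + w}

/-- `P` is an affine subspace of `ℝⁿ` of dimension `α`. -/
def IsAffineOfDim {n : ℕ} (α : ℕ) (P : Set (Fin n → ℝ)) : Prop :=
  ∃ W : Submodule ℝ (Fin n → ℝ), Module.finrank ℝ W = α ∧ IsAffineWithDir P W

/-- `x` is a joint of the families `𝒮 i` of affine subspaces: there exist members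
`P i ∈ 𝒮 i`, each containing `x`, whose direction subspaces together span `ℝⁿ`. -/
def IsJointOfFlats {n k : ℕ} (𝒮 : Fin k → Finset (Set (Fin n → ℝ))) (x : Fin n → ℝ) :
    Prop :=
  ∃ (P : Fin k → Set (Fin n → ℝ)) (W : Fin k → Submodule ℝ (Fin n → ℝ)),
    (∀ i, P i ∈ 𝒮 i) ∧ (∀ i, IsAffineWithDir (P i) (W i)) ∧ (∀ i, x ∈ P i) ∧
    (⨆ i, W i) = ⊤

/-!
Split the coordinates of `ℝⁿ` into blocks `B₁, …, Bₖ` with `|Bᵢ| = αᵢ`. The flats of the `i`-th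
family fix the coordinates outside `Bᵢ` to a value in `{0, …, S - 1}` per block, so there are
`S^(k-1)` of them, each parallel to the coordinate subspace `ℝ^Bᵢ`. Every point of the grid
`{0, …, S - 1}^k`, placed constantly on each block, lies on one flat of each family, and the
coordinate subspaces `ℝ^Bᵢ` span `ℝⁿ`; this gives `S^k` joints.
-/

open Module Finset

section CoordSubspace

variable (K : Type*) {ι : Type*} [Field K]

def coordSubspace (s : Set ι) : Submodule K (ι → K) :=
  LinearMap.ker (LinearMap.funLeft K K ((↑) : (sᶜ : Set ι) → ι))

variable {K}

theorem mem_coordSubspace {s : Set ι} {w : ι → K} :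
    w ∈ coordSubspace K s ↔ ∀ m ∉ s, w m = 0 := by
  simp [coordSubspace, funext_iff]

theorem finrank_coordSubspace [Finite ι] (s : Set ι) :
    finrank K (coordSubspace K s) = Nat.card s := by
  classical
  have := Fintype.ofFinite ι
  have hrange := LinearMap.range_eq_top.2 <|
    LinearMap.funLeft_surjective_of_injective K K _ (Subtype.val_injective (p := (· ∈ sᶜ)))
  have hrank := LinearMap.finrank_range_add_finrank_ker
    (LinearMap.funLeft K K ((↑) : (sᶜ : Set ι) → ι))
  rw [hrange, finrank_top, finrank_fintype_fun_eq_card, finrank_fintype_fun_eq_card,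
    Fintype.card_compl_set] at hrank
  have := set_fintype_card_le_univ s
  rw [Nat.card_eq_fintype_card, coordSubspace]
  omega

theorem iSup_coordSubspace_fiber [Finite ι] {κ : Type*} (b : ι → κ) :
    ⨆ i, coordSubspace K (b ⁻¹' {i}) = ⊤ := by
  classical
  have := Fintype.ofFinite ι
  refine eq_top_iff.2 fun x _ => ?_
  rw [← Finset.univ_sum_single x]
  refine Submodule.sum_mem _ fun m _ => Submodule.mem_iSup_of_mem (b m) ?_
  rw [mem_coordSubspace]
  intro m' hm'
  exact Pi.single_eq_of_ne (by rintro rfl; exact hm' rfl) _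

end CoordSubspace

theorem exists_fiber_card_eq {ι κ : Type*} [Fintype ι] [Fintype κ] (α : κ → ℕ)
    (h : ∑ i, α i = Fintype.card ι) : ∃ b : ι → κ, ∀ i, Nat.card (b ⁻¹' {i}) = α i := by
  obtain ⟨e⟩ : Nonempty ((Σ i, Fin (α i)) ≃ ι) := ⟨Fintype.equivOfCardEq (by simp [h])⟩
  refine ⟨fun m => (e.symm m).1, fun i => ?_⟩
  rw [← Nat.card_fin (α i)]
  exact Nat.card_congr <| (e.symm.subtypeEquiv fun _ => Iff.rfl).trans (Equiv.sigmaSubtype i)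

section FixedCoords

variable {K ι : Type*}

def fixedCoordsFlat (s : Set ι) (p : ι → K) : Set (ι → K) :=
  {x | ∀ m ∉ s, x m = p m}

theorem isAffineWithDir_fixedCoordsFlat {n : ℕ} (s : Set (Fin n)) (p : Fin n → ℝ) :
    IsAffineWithDir (fixedCoordsFlat s p) (coordSubspace ℝ s) := by
  refine ⟨p, Set.ext fun x => ⟨fun hx => ⟨x - p, ?_, by simp⟩, ?_⟩⟩
  · exact mem_coordSubspace.2 fun m hm => sub_eq_zero.2 (hx m hm)
  · rintro ⟨w, hw, rfl⟩ m hm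
    simp [mem_coordSubspace.1 hw m hm]

theorem eq_of_fixedCoordsFlat_eq {s : Set ι} {p q : ι → K}
    (h : fixedCoordsFlat s p = fixedCoordsFlat s q) : ∀ m ∉ s, p m = q m :=
  (h ▸ fun _ _ => rfl : p ∈ fixedCoordsFlat s q)

end FixedCoords

noncomputable section Grid

variable {n k : ℕ} (b : Fin n → Fin k) (S : ℕ)

def gridFlat (i : Fin k) (c : {j // j ≠ i} → ℝ) : Set (Fin n → ℝ) :=
  fixedCoordsFlat (b ⁻¹' {i}) fun m => if h : b m = i then 0 else c ⟨b m, h⟩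

def gridFlats (i : Fin k) : Finset (Set (Fin n → ℝ)) :=
  univ.image fun c : {j // j ≠ i} → Fin S => gridFlat b i fun j => c j

def gridJoints : Finset (Fin n → ℝ) :=
  univ.image fun (t : Fin k → Fin S) m => (t (b m) : ℝ)

variable {b S}

theorem gridFlat_injective (hb : Function.Surjective b) (i : Fin k) :
    Function.Injective (gridFlat b i) := by
  intro c c' h
  funext j
  obtain ⟨m, hm⟩ := hb j
  have hmi : b m ≠ i := hm ▸ j.2
  have := eq_of_fixedCoordsFlat_eq h m hmi
  simp only [dif_neg hmi] at this
  rwa [show (⟨b m, hmi⟩ : {j // j ≠ i}) = j from Subtype.ext hm] at this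

theorem card_gridFlats (hb : Function.Surjective b) (i : Fin k) :
    #(gridFlats b S i) = S ^ (k - 1) := by
  rw [gridFlats, card_image_of_injective]
  · simp
  · exact (gridFlat_injective hb i).comp fun c c' h => funext fun j => Fin.val_injective <|
      Nat.cast_injective (congrFun h j)

theorem isAffineOfDim_of_mem_gridFlats {i : Fin k} {P : Set (Fin n → ℝ)}
    (hP : P ∈ gridFlats b S i) : IsAffineOfDim (Nat.card (b ⁻¹' {i})) P := by
  obtain ⟨c, -, rfl⟩ := mem_image.1 hP
  exact ⟨_, finrank_coordSubspace _, isAffineWithDir_fixedCoordsFlat _ _⟩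

theorem card_gridJoints (hb : Function.Surjective b) : #(gridJoints b S) = S ^ k := by
  rw [gridJoints, card_image_of_injective]
  · simp
  · intro t t' h
    funext j
    obtain ⟨m, rfl⟩ := hb j
    exact Fin.val_injective <| Nat.cast_injective (congrFun h m)

theorem isJointOfFlats_of_mem_gridJoints {x : Fin n → ℝ} (hx : x ∈ gridJoints b S) :
    IsJointOfFlats (gridFlats b S) x := by
  obtain ⟨t, -, rfl⟩ := mem_image.1 hx
  refine ⟨fun i => gridFlat b i fun j => t j, fun i => coordSubspace ℝ (b ⁻¹' {i}),
    fun i => mem_image_of_mem _ (mem_univ _), fun i => isAffineWithDir_fixedCoordsFlat _ _,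
    fun i m (hm : b m ≠ i) => ?_, iSup_coordSubspace_fiber b⟩
  simp [hm]

end Grid

theorem joints_flats_grid_example_general (n k : ℕ)
    (α : Fin k → ℕ) (hα : ∀ i, 0 < α i) (hsum : ∑ i, α i = n)
    (S : ℕ) :
    ∃ 𝒮 : Fin k → Finset (Set (Fin n → ℝ)),
      (∀ i, (𝒮 i).card = S ^ (k - 1)) ∧
      (∀ i, ∀ P ∈ 𝒮 i, IsAffineOfDim (α i) P) ∧
      ∃ J : Finset (Fin n → ℝ), S ^ k ≤ J.card ∧ ∀ x ∈ J, IsJointOfFlats 𝒮 x := by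
  obtain ⟨b, hb⟩ := exists_fiber_card_eq (ι := Fin n) α (by simpa using hsum)
  have hsurj : Function.Surjective b := fun i => by
    obtain ⟨⟨m, hm⟩⟩ := (Nat.card_pos_iff.1 ((hb i).symm ▸ hα i)).1
    exact ⟨m, hm⟩
  exact ⟨gridFlats b S, card_gridFlats hsurj,
    fun i _ hP => hb i ▸ isAffineOfDim_of_mem_gridFlats hP, gridJoints b S,
    (card_gridJoints hsurj).ge, fun _ hx => isJointOfFlats_of_mem_gridJoints hx⟩

/-- Lower-bound example for the joints problem for higher-dimensional flats: there are
families `𝒮₁,…,𝒮ₖ`, where `𝒮ᵢ` consists of `S^(k-1)` affine subspaces of `ℝⁿ` of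
dimension `αᵢ`, forming at least `S^k = (∏ᵢ|𝒮ᵢ|)^(1/(k-1))` joints. -/
theorem joints_flats_grid_example (n k : ℕ) (hn : 2 ≤ n) (hk : 2 ≤ k)
    (α : Fin k → ℕ) (hα : ∀ i, 0 < α i) (hsum : ∑ i, α i = n)
    (S : ℕ) (hS : 0 < S) :
    ∃ 𝒮 : Fin k → Finset (Set (Fin n → ℝ)),
      (∀ i, (𝒮 i).card = S ^ (k - 1)) ∧
      (∀ i, ∀ P ∈ 𝒮 i, IsAffineOfDim (α i) P) ∧
      ∃ J : Finset (Fin n → ℝ), S ^ k ≤ J.card ∧ ∀ x ∈ J, IsJointOfFlats 𝒮 x :=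
  joints_flats_grid_example_general n k α hα hsum S
end
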